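/- arXiv:1310.4477 — 4 statements merged into one kernel-verified Lean document; each statement's English description precedes it below -/
import Mathlib

section
/- If an N-qubit state ρ is a product of single-qubit states, i.e. ρ(x,y) = ∏_{j=1}^{N} ρʲ(x j, y j) for single-qubit states ρ¹,…,ρᴺ, then C(ρ) = 0. -/
open scoped BigOperators ComplexOrder Matrix

/-- Matrices representing operators on qubits indexed by `ι`. -/
abbrev QMat (ι : Type) : Type := Matrix (ι → Fin 2) (ι → Fin 2) ℂ

/-- A multi-qubit state: positive semidefinite with trace one. -/
def IsState {ι : Type} [Fintype ι] [DecidableEq ι] (ρ : QMat ι) : Prop :=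
  ρ.PosSemidef ∧ ρ.trace = 1

/-- Combine `u : A → Fin 2` with `w : Aᶜ → Fin 2` into a function on all qubits. -/
def glue {ι : Type} [Fintype ι] [DecidableEq ι] (A : Finset ι)
    (u : {x // x ∈ A} → Fin 2) (w : {x // x ∈ Aᶜ} → Fin 2) : ι → Fin 2 :=
  fun x => if h : x ∈ A then u ⟨x, h⟩ else w ⟨x, Finset.mem_compl.mpr h⟩

/-- The reduced matrix on the qubits in `A`, obtained by tracing out `Aᶜ`;
`Tr_B ρ = reduceTo Bᶜ ρ`. -/
noncomputable def reduceTo {ι : Type} [Fintype ι] [DecidableEq ι] (A : Finset ι)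
    (ρ : QMat ι) : QMat {x // x ∈ A} :=
  fun u v => ∑ w : {x // x ∈ Aᶜ} → Fin 2, ρ (glue A u w) (glue A v w)

/-- The Kronecker product of a state on `A` and a state on `Aᶜ`, with the tensor
factors placed back at their original qubit positions. -/
def boxProd {ι : Type} [Fintype ι] [DecidableEq ι] (A : Finset ι)
    (σ₁ : QMat {x // x ∈ A}) (σ₂ : QMat {x // x ∈ Aᶜ}) : QMat ι :=
  fun x y =>
    σ₁ (fun a => x a.1) (fun a => y a.1) * σ₂ (fun b => x b.1) (fun b => y b.1)

/-- The cumulative correlation measure (CCM), defined recursively: it vanishes on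
one-qubit states, and otherwise is the minimum over all bipartitions `(A, Aᶜ)` of
`2^(N-2) * D(ρ, ρ_A ⊠ ρ_{Aᶜ}) + C(ρ_A) + C(ρ_{Aᶜ})`. -/
noncomputable def CCM (D : ∀ (κ : Type) [Fintype κ] [DecidableEq κ], QMat κ → QMat κ → ℝ)
    (ι : Type) [Fintype ι] [DecidableEq ι] (ρ : QMat ι) : ℝ :=
  if Fintype.card ι ≤ 1 then 0
  else
    sInf { r : ℝ |
      ∃ A : {A : Finset ι // A.Nonempty ∧ Aᶜ.Nonempty},
        r = (2 : ℝ) ^ (Fintype.card ι - 2) *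
              D ι ρ (boxProd A.1 (reduceTo A.1 ρ) (reduceTo (A.1 : Finset ι)ᶜ ρ)) +
            CCM D {x // x ∈ A.1} (reduceTo A.1 ρ) +
            CCM D {x // x ∈ (A.1 : Finset ι)ᶜ} (reduceTo (A.1 : Finset ι)ᶜ ρ) }
termination_by Fintype.card ι
decreasing_by
  · have hA : (A.1 : Finset ι) ≠ Finset.univ := by
      intro h
      rcases A.2.2 with ⟨x, hx⟩
      rw [h] at hx
      simp at hx
    calc Fintype.card {x // x ∈ A.1} = (A.1 : Finset ι).card := Fintype.card_coe _
      _ < Fintype.card ι := (Finset.card_lt_iff_ne_univ _).mpr hA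
  · have hA : ((A.1 : Finset ι)ᶜ : Finset ι) ≠ Finset.univ :=
      (Finset.compl_ne_univ_iff_nonempty _).mpr A.2.1
    calc Fintype.card {x // x ∈ (A.1 : Finset ι)ᶜ} = ((A.1 : Finset ι)ᶜ).card :=
        Fintype.card_coe _
      _ < Fintype.card ι := (Finset.card_lt_iff_ne_univ _).mpr hA
/-- The product Kraus operator `E_f = ⊗_j K j (f j)` acting on all qubits. -/
def krausProd {ι : Type} [Fintype ι] (m : ι → ℕ)
    (K : ∀ j : ι, Fin (m j) → Matrix (Fin 2) (Fin 2) ℂ) (f : ∀ j, Fin (m j)) :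
    Matrix (ι → Fin 2) (ι → Fin 2) ℂ :=
  fun x y => ∏ j, K j (f j) (x j) (y j)

/-- The local quantum operation `ε = ε¹ ⊗ ⋯ ⊗ εᴺ` determined by single-qubit
Kraus operators `K j i` on each qubit `j`. -/
noncomputable def applyLocalKraus {ι : Type} [Fintype ι] [DecidableEq ι] (m : ι → ℕ)
    (K : ∀ j : ι, Fin (m j) → Matrix (Fin 2) (Fin 2) ℂ) (ρ : QMat ι) : QMat ι :=
  ∑ f : ∀ j, Fin (m j), krausProd m K f * ρ * (krausProd m K f)ᴴ

/-- The axioms required of the distance `D`: nonnegativity and `D(ρ,ρ) = 0`,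
invariance under unitary conjugation, contractivity under local quantum
operations, and monotonicity under partial traces. -/
structure DistanceAxioms
    (D : ∀ (κ : Type) [Fintype κ] [DecidableEq κ], QMat κ → QMat κ → ℝ) : Prop where
  nonneg : ∀ (ι : Type) [Fintype ι] [DecidableEq ι] (ρ σ : QMat ι),
    IsState ρ → IsState σ → 0 ≤ D ι ρ σ
  self_eq_zero : ∀ (ι : Type) [Fintype ι] [DecidableEq ι] (ρ : QMat ι),
    IsState ρ → D ι ρ ρ = 0
  unitary_invariance : ∀ (ι : Type) [Fintype ι] [DecidableEq ι]
      (U : Matrix (ι → Fin 2) (ι → Fin 2) ℂ), U * Uᴴ = 1 → Uᴴ * U = 1 →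
      ∀ ρ σ : QMat ι, IsState ρ → IsState σ →
        D ι (U * ρ * Uᴴ) (U * σ * Uᴴ) = D ι ρ σ
  contractivity : ∀ (ι : Type) [Fintype ι] [DecidableEq ι]
      (m : ι → ℕ) (K : ∀ j : ι, Fin (m j) → Matrix (Fin 2) (Fin 2) ℂ),
      (∀ j, ∑ i, (K j i)ᴴ * K j i = 1) →
      ∀ ρ σ : QMat ι, IsState ρ → IsState σ →
        D ι (applyLocalKraus m K ρ) (applyLocalKraus m K σ) ≤ D ι ρ σ
  monotonicity : ∀ (ι : Type) [Fintype ι] [DecidableEq ι] (B : Finset ι)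
      (ρ σ : QMat ι), IsState ρ → IsState σ →
        D {x // x ∈ Bᶜ} (reduceTo Bᶜ ρ) (reduceTo Bᶜ σ) ≤ D ι ρ σ

/-- The Kronecker product of multi-qubit states, on the disjoint union of the
qubit index sets. -/
def kron {ι κ : Type} (φ : QMat ι) (ψ : QMat κ) : QMat (ι ⊕ κ) :=
  fun x y =>
    φ (fun i => x (Sum.inl i)) (fun i => y (Sum.inl i)) *
      ψ (fun j => x (Sum.inr j)) (fun j => y (Sum.inr j))

/-!
A product state is recovered exactly from its reduced states on the two sides of any
bipartition, and these reduced states are again product states, because the traced-out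
factors have trace one. So every distance term `D(ρ, ρ_A ⊠ ρ_B)` is `D(ρ, ρ) = 0`, and
induction on the number of qubits makes the recursive terms vanish as well.
-/

namespace Matrix

variable {ι n R : Type*} [Fintype ι]

def kronPi [CommMonoid R] (M : ι → Matrix n n R) : Matrix (ι → n) (ι → n) R :=
  of fun x y => ∏ j, M j (x j) (y j)

@[simp]
theorem kronPi_apply [CommMonoid R] (M : ι → Matrix n n R) (x y : ι → n) :
    kronPi M x y = ∏ j, M j (x j) (y j) :=
  rfl

theorem kronPi_conjTranspose [CommSemiring R] [StarRing R] (M : ι → Matrix n n R) :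
    (kronPi M)ᴴ = kronPi fun j => (M j)ᴴ := by
  ext x y
  simp [star_prod]

variable [DecidableEq ι] [Fintype n]

theorem kronPi_mul [CommSemiring R] (M M' : ι → Matrix n n R) :
    kronPi M * kronPi M' = kronPi fun j => M j * M' j := by
  ext x y
  simp only [mul_apply, kronPi_apply, Fintype.prod_sum, Finset.prod_mul_distrib]

theorem trace_kronPi [CommSemiring R] (M : ι → Matrix n n R) :
    (kronPi M).trace = ∏ j, (M j).trace := by
  simp only [trace, diag, kronPi_apply, Fintype.prod_sum]

open scoped MatrixOrder Matrix.Norms.L2Operator in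
theorem PosSemidef.kronPi {𝕜 : Type*} [RCLike 𝕜] {M : ι → Matrix n n 𝕜}
    (hM : ∀ j, (M j).PosSemidef) : (kronPi M).PosSemidef := by
  classical
  choose B hB using fun j => CStarAlgebra.nonneg_iff_eq_star_mul_self.mp (hM j).nonneg
  rw [show M = fun j => (B j)ᴴ * B j from funext hB, ← kronPi_mul, ← kronPi_conjTranspose]
  exact posSemidef_conjTranspose_mul_self _

end Matrix

open Matrix

section Qubits

variable {ι : Type} [Fintype ι] [DecidableEq ι]

theorem isState_kronPi {M : ι → Matrix (Fin 2) (Fin 2) ℂ}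
    (hM : ∀ j, (M j).PosSemidef ∧ (M j).trace = 1) : IsState (kronPi M) :=
  ⟨.kronPi fun j => (hM j).1, by rw [trace_kronPi]; exact Finset.prod_eq_one fun j _ => (hM j).2⟩

@[simp]
theorem glue_apply_of_mem (A : Finset ι) (u : {x // x ∈ A} → Fin 2)
    (w : {x // x ∈ Aᶜ} → Fin 2) (a : {x // x ∈ A}) : glue A u w a = u a := by
  simp [glue, a.2]

@[simp]
theorem glue_apply_of_mem_compl (A : Finset ι) (u : {x // x ∈ A} → Fin 2)
    (w : {x // x ∈ Aᶜ} → Fin 2) (b : {x // x ∈ Aᶜ}) : glue A u w b = w b := by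
  simp [glue, Finset.mem_compl.mp b.2]

theorem boxProd_glue (A : Finset ι) (σ : QMat {x // x ∈ A}) (τ : QMat {x // x ∈ Aᶜ})
    (u v : {x // x ∈ A} → Fin 2) (w w' : {x // x ∈ Aᶜ} → Fin 2) :
    boxProd A σ τ (glue A u w) (glue A v w') = σ u v * τ w w' := by
  simp [boxProd]

theorem boxProd_kronPi (A : Finset ι) (M : ι → Matrix (Fin 2) (Fin 2) ℂ) :
    boxProd A (kronPi fun a : {x // x ∈ A} => M a) (kronPi fun b : {x // x ∈ Aᶜ} => M b) =
      kronPi M := by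
  ext x y
  rw [boxProd, kronPi_apply, kronPi_apply, kronPi_apply, ← Finset.prod_mul_prod_compl A,
    Finset.prod_coe_sort A fun j => M j (x j) (y j),
    Finset.prod_coe_sort Aᶜ fun j => M j (x j) (y j)]

theorem kronPi_glue (A : Finset ι) (M : ι → Matrix (Fin 2) (Fin 2) ℂ)
    (u v : {x // x ∈ A} → Fin 2) (w w' : {x // x ∈ Aᶜ} → Fin 2) :
    kronPi M (glue A u w) (glue A v w') =
      kronPi (fun a : {x // x ∈ A} => M a) u v * kronPi (fun b : {x // x ∈ Aᶜ} => M b) w w' := by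
  rw [← boxProd_kronPi A M, boxProd_glue]

theorem reduceTo_kronPi (A : Finset ι) {M : ι → Matrix (Fin 2) (Fin 2) ℂ}
    (hM : ∀ j ∉ A, (M j).trace = 1) :
    reduceTo A (kronPi M) = kronPi fun a : {x // x ∈ A} => M a := by
  ext u v
  have htrace : (kronPi fun b : {x // x ∈ Aᶜ} => M b).trace = 1 :=
    (trace_kronPi _).trans <| Finset.prod_eq_one fun b _ => hM b (Finset.mem_compl.mp b.2)
  simp only [reduceTo, kronPi_glue, ← Finset.mul_sum]
  exact mul_right_eq_self₀.mpr (.inl htrace)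

theorem boxProd_reduceTo_kronPi (A : Finset ι) {M : ι → Matrix (Fin 2) (Fin 2) ℂ}
    (hM : ∀ j, (M j).trace = 1) :
    boxProd A (reduceTo A (kronPi M)) (reduceTo Aᶜ (kronPi M)) = kronPi M := by
  rw [reduceTo_kronPi A fun j _ => hM j, reduceTo_kronPi Aᶜ fun j _ => hM j, boxProd_kronPi]

theorem exists_bipartition (h : 1 < Fintype.card ι) :
    ∃ A : Finset ι, A.Nonempty ∧ Aᶜ.Nonempty := by
  obtain ⟨a, b, hab⟩ := Fintype.exists_pair_of_one_lt_card h
  exact ⟨{a}, Finset.singleton_nonempty a, b, by simpa using hab.symm⟩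

variable {D : ∀ (κ : Type) [Fintype κ] [DecidableEq κ], QMat κ → QMat κ → ℝ}

theorem ccm_eq_zero_of_forall_bipartition {ρ : QMat ι}
    (h : ∀ A : Finset ι, A.Nonempty → Aᶜ.Nonempty →
      D ι ρ (boxProd A (reduceTo A ρ) (reduceTo Aᶜ ρ)) = 0 ∧
        CCM D {x // x ∈ A} (reduceTo A ρ) = 0 ∧ CCM D {x // x ∈ Aᶜ} (reduceTo Aᶜ ρ) = 0) :
    CCM D ι ρ = 0 := by
  rw [CCM]
  split_ifs with hcard
  · rfl
  · refine (congrArg sInf ?_).trans (csInf_singleton 0)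
    ext r
    constructor
    · rintro ⟨⟨A, hA, hAc⟩, rfl⟩
      obtain ⟨hdist, hCA, hCAc⟩ := h A hA hAc
      simp [hdist, hCA, hCAc]
    · rintro rfl
      obtain ⟨A, hA, hAc⟩ := exists_bipartition (not_le.mp hcard)
      obtain ⟨hdist, hCA, hCAc⟩ := h A hA hAc
      exact ⟨⟨A, hA, hAc⟩, by simp [hdist, hCA, hCAc]⟩

theorem ccm_kronPi_eq_zero
    (hD : ∀ (κ : Type) [Fintype κ] [DecidableEq κ] (ρ : QMat κ), IsState ρ → D κ ρ ρ = 0)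
    {M : ι → Matrix (Fin 2) (Fin 2) ℂ} (hM : ∀ j, (M j).PosSemidef ∧ (M j).trace = 1) :
    CCM D ι (kronPi M) = 0 := by
  induction hcard : Fintype.card ι using Nat.strong_induction_on generalizing ι with
  | _ n ih =>
  have htrace : ∀ j, (M j).trace = 1 := fun j => (hM j).2
  refine ccm_eq_zero_of_forall_bipartition fun A hA hAc => ⟨?_, ?_, ?_⟩
  · rw [boxProd_reduceTo_kronPi A htrace]
    exact hD ι _ (isState_kronPi hM)
  · rw [reduceTo_kronPi A fun j _ => htrace j]
    refine ih _ ?_ (fun a => hM a) rfl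
    rw [← hcard, Fintype.card_coe, ← compl_compl A]
    exact (Finset.card_compl_lt_iff_nonempty Aᶜ).mpr hAc
  · rw [reduceTo_kronPi Aᶜ fun j _ => htrace j]
    refine ih _ ?_ (fun b => hM b) rfl
    rw [← hcard, Fintype.card_coe]
    exact (Finset.card_compl_lt_iff_nonempty A).mpr hA

end Qubits

theorem ccm_product_eq_zero_general
    (D : ∀ (κ : Type) [Fintype κ] [DecidableEq κ], QMat κ → QMat κ → ℝ)
    (hD : DistanceAxioms D)
    (N : ℕ)
    (ρs : Fin N → Matrix (Fin 2) (Fin 2) ℂ)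
    (hρs : ∀ j, (ρs j).PosSemidef ∧ (ρs j).trace = 1)
    (ρ : QMat (Fin N))
    (hprod : ∀ x y, ρ x y = ∏ j, ρs j (x j) (y j)) :
    CCM D (Fin N) ρ = 0 := by
  obtain rfl : ρ = kronPi ρs := Matrix.ext hprod
  exact ccm_kronPi_eq_zero hD.self_eq_zero hρs

/-- If an `N`-qubit state `ρ` is a product of single-qubit states,
i.e. `ρ(x,y) = ∏ j, ρʲ(x j, y j)` for single-qubit states `ρ¹, …, ρᴺ`, then
`C(ρ) = 0`. -/
theorem ccm_product_eq_zero
    (D : ∀ (κ : Type) [Fintype κ] [DecidableEq κ], QMat κ → QMat κ → ℝ)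
    (hD : DistanceAxioms D)
    (N : ℕ) (hN : 1 ≤ N)
    (ρs : Fin N → Matrix (Fin 2) (Fin 2) ℂ)
    (hρs : ∀ j, (ρs j).PosSemidef ∧ (ρs j).trace = 1)
    (ρ : QMat (Fin N)) (hρ : IsState ρ)
    (hprod : ∀ x y, ρ x y = ∏ j, ρs j (x j) (y j)) :
    CCM D (Fin N) ρ = 0 :=
  ccm_product_eq_zero_general D hD N ρs hρs ρ hprod
end

section
/- CCM is invariant under local unitary transformations: if U is an N-qubit local unitary, i.e. U(x,y) = ∏_{j=1}^{N} Uʲ(x j, y j) with each Uʲ a 2×2 unitary matrix, then for every N-qubit state ρ, C(U ρ U†) = C(ρ). -/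
open scoped BigOperators ComplexOrder Matrix

/-!
A local unitary `U = ⊗ⱼ Uʲ` splits along every bipartition `(A, Aᶜ)` as `U_A ⊗ U_{Aᶜ}`. Tracing
out `Aᶜ` absorbs the unitary factor `U_{Aᶜ}`, so the reduced states of `U ρ U†` are
`U_A ρ_A U_A†` and `U_{Aᶜ} ρ_{Aᶜ} U_{Aᶜ}†`, and therefore `(UρU†)_A ⊠ (UρU†)_{Aᶜ} = U (ρ_A ⊠ ρ_{Aᶜ}) U†`.
Unitary invariance of `D` leaves the distance term of each bipartition unchanged, and the two
CCM terms are unchanged by induction on the number of qubits, applied to the local unitaries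
`U_A` and `U_{Aᶜ}`.
-/

open Matrix
open scoped Kronecker

namespace Matrix

variable {ι m n α α' β γ δ R : Type*}

theorem trace_submatrix_equiv [Fintype m] [Fintype n] [AddCommMonoid R] (M : Matrix n n R)
    (e : m ≃ n) : (M.submatrix e e).trace = M.trace :=
  e.sum_comp M.diag

def partialTraceRight [Fintype β] [AddCommMonoid R] (M : Matrix (α × β) (α' × β) R) :
    Matrix α α' R :=
  fun a a' => ∑ b, M (a, b) (a', b)

theorem trace_partialTraceRight [Fintype α] [Fintype β] [AddCommMonoid R]
    (M : Matrix (α × β) (α × β) R) : M.partialTraceRight.trace = M.trace := by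
  simp [trace, partialTraceRight, Fintype.sum_prod_type]

theorem PosSemidef.partialTraceRight [Fintype β] [Ring R] [PartialOrder R] [StarRing R]
    [AddLeftMono R] {M : Matrix (α × β) (α × β) R} (hM : M.PosSemidef) :
    M.partialTraceRight.PosSemidef := by
  have : M.partialTraceRight = ∑ b, M.submatrix (·, b) (·, b) := by
    ext; simp [Matrix.partialTraceRight, sum_apply]
  rw [this]
  exact posSemidef_sum _ fun b _ => hM.submatrix _

section PartialTraceKronecker

variable [Fintype β] [DecidableEq β] [CommSemiring R]

theorem partialTraceRight_kronecker_one_mul [Fintype α] (X : Matrix γ α R)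
    (M : Matrix (α × β) (α' × β) R) :
    ((X ⊗ₖ (1 : Matrix β β R)) * M).partialTraceRight = X * M.partialTraceRight := by
  ext c a'
  simp only [partialTraceRight, mul_apply, kroneckerMap_apply, one_apply, mul_ite, mul_one,
    mul_zero, ite_mul, zero_mul, Fintype.sum_prod_type, Finset.sum_ite_eq, Finset.mem_univ,
    if_true, Finset.mul_sum]
  exact Finset.sum_comm

theorem partialTraceRight_mul_kronecker_one [Fintype α'] (M : Matrix (α × β) (α' × β) R)
    (X : Matrix α' γ R) :
    (M * (X ⊗ₖ (1 : Matrix β β R))).partialTraceRight = M.partialTraceRight * X := by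
  ext a c
  simp only [partialTraceRight, mul_apply, kroneckerMap_apply, one_apply, mul_ite, mul_one,
    mul_zero, Fintype.sum_prod_type, Finset.sum_ite_eq', Finset.mem_univ, if_true, Finset.sum_mul]
  exact Finset.sum_comm

omit [DecidableEq β] in
theorem partialTraceRight_one_kronecker_mul_comm [Fintype α] [Fintype α'] [Fintype δ]
    [DecidableEq α] [DecidableEq α'] (Y : Matrix δ β R) (M : Matrix (α × β) (α' × δ) R) :
    (((1 : Matrix α α R) ⊗ₖ Y) * M).partialTraceRight =
      (M * ((1 : Matrix α' α' R) ⊗ₖ Y)).partialTraceRight := by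
  ext a a'
  simp only [partialTraceRight, mul_apply, kroneckerMap_apply, one_apply, ite_mul, one_mul,
    zero_mul, Fintype.sum_prod_type, Finset.sum_ite_irrel, Finset.sum_const_zero,
    Finset.sum_ite_eq, Finset.mem_univ, if_true, mul_ite, mul_zero, Finset.sum_ite_eq']
  exact Finset.sum_comm.trans <|
    Finset.sum_congr rfl fun _ _ => Finset.sum_congr rfl fun _ _ => mul_comm _ _

/-- Write `X ⊗ Y = (X ⊗ 1) * (1 ⊗ Y)`: the `X ⊗ 1` factors pass through the partial trace, and
`1 ⊗ Y` may be cycled to the other side under it, where it meets `1 ⊗ Yᴴ` and cancels. -/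
theorem partialTraceRight_conj_kronecker [Fintype α] [Fintype δ] [DecidableEq α] [DecidableEq δ]
    [StarRing R] (X : Matrix γ α R) (Y : Matrix δ β R) (hY : Yᴴ * Y = 1)
    (M : Matrix (α × β) (α × β) R) :
    ((X ⊗ₖ Y) * M * (X ⊗ₖ Y)ᴴ).partialTraceRight = X * M.partialTraceRight * Xᴴ := by
  have hXY : X ⊗ₖ Y = (X ⊗ₖ (1 : Matrix δ δ R)) * ((1 : Matrix α α R) ⊗ₖ Y) := by
    rw [← mul_kronecker_mul, Matrix.mul_one, Matrix.one_mul]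
  rw [hXY, conjTranspose_mul, conjTranspose_kronecker, conjTranspose_kronecker, conjTranspose_one,
    conjTranspose_one]
  simp only [← Matrix.mul_assoc]
  rw [partialTraceRight_mul_kronecker_one]
  simp only [Matrix.mul_assoc]
  rw [partialTraceRight_kronecker_one_mul, partialTraceRight_one_kronecker_mul_comm,
    Matrix.mul_assoc M, ← mul_kronecker_mul, hY, Matrix.one_mul, one_kronecker_one, Matrix.mul_one,
    Matrix.mul_assoc]

end PartialTraceKronecker

def piKronecker [Fintype ι] [CommMonoid R] (M : ι → Matrix m n R) : Matrix (ι → m) (ι → n) R :=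
  fun x y => ∏ j, M j (x j) (y j)

section PiKronecker

variable [Fintype ι] [CommSemiring R]

theorem piKronecker_mul [DecidableEq ι] [Fintype n] (M : ι → Matrix m n R)
    (N : ι → Matrix n α R) : piKronecker M * piKronecker N = piKronecker fun j => M j * N j := by
  ext x y
  simp only [mul_apply, piKronecker, Fintype.prod_sum, Finset.prod_mul_distrib]

theorem piKronecker_one [DecidableEq m] :
    piKronecker (fun _ => 1 : ι → Matrix m m R) = 1 := by
  ext x y
  by_cases h : x = y
  · subst h
    simp [piKronecker]
  · obtain ⟨j, hj⟩ := Function.ne_iff.mp h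
    simp [piKronecker, one_apply, h, Finset.prod_eq_zero (Finset.mem_univ j), hj]

theorem piKronecker_conjTranspose [StarRing R] (M : ι → Matrix m n R) :
    (piKronecker M)ᴴ = piKronecker fun j => (M j)ᴴ := by
  ext x y
  simp [piKronecker, star_prod]

theorem piKronecker_mem_unitary [DecidableEq ι] [Fintype m] [DecidableEq m] [StarRing R]
    {M : ι → Matrix m m R} (hM : ∀ j, M j ∈ unitary (Matrix m m R)) :
    piKronecker M ∈ unitary (Matrix (ι → m) (ι → m) R) := by
  have hstar : star (piKronecker M) = piKronecker fun j => star (M j) :=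
    piKronecker_conjTranspose M
  rw [Unitary.mem_iff, hstar, piKronecker_mul, piKronecker_mul]
  simp only [Unitary.star_mul_self_of_mem (hM _), Unitary.mul_star_self_of_mem (hM _),
    piKronecker_one, and_self]

end PiKronecker

end Matrix

section Bipartition

variable {ι : Type} [Fintype ι] [DecidableEq ι] (A : Finset ι)

def glueEquiv : (({x // x ∈ A} → Fin 2) × ({x // x ∈ Aᶜ} → Fin 2)) ≃ (ι → Fin 2) where
  toFun p := glue A p.1 p.2
  invFun x := (fun a => x a.1, fun b => x b.1)
  left_inv p := by
    ext a
    · simp [glue, a.2]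
    · simp [glue, Finset.mem_compl.mp a.2]
  right_inv x := by
    ext j
    by_cases h : j ∈ A <;> simp [glue, h]

theorem reduceTo_eq_partialTraceRight (ρ : QMat ι) :
    reduceTo A ρ = (ρ.submatrix (glueEquiv A) (glueEquiv A)).partialTraceRight :=
  rfl

theorem boxProd_eq_submatrix_kronecker (σ₁ : QMat {x // x ∈ A}) (σ₂ : QMat {x // x ∈ Aᶜ}) :
    boxProd A σ₁ σ₂ = (σ₁ ⊗ₖ σ₂).submatrix (glueEquiv A).symm (glueEquiv A).symm :=
  rfl

theorem submatrix_glueEquiv_boxProd (σ₁ : QMat {x // x ∈ A}) (σ₂ : QMat {x // x ∈ Aᶜ}) :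
    (boxProd A σ₁ σ₂).submatrix (glueEquiv A) (glueEquiv A) = σ₁ ⊗ₖ σ₂ := by
  simp [boxProd_eq_submatrix_kronecker]

theorem boxProd_mul (M₁ N₁ : QMat {x // x ∈ A}) (M₂ N₂ : QMat {x // x ∈ Aᶜ}) :
    boxProd A M₁ M₂ * boxProd A N₁ N₂ = boxProd A (M₁ * N₁) (M₂ * N₂) := by
  simp only [boxProd_eq_submatrix_kronecker, submatrix_mul_equiv, mul_kronecker_mul]

theorem boxProd_conjTranspose (M₁ : QMat {x // x ∈ A}) (M₂ : QMat {x // x ∈ Aᶜ}) :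
    (boxProd A M₁ M₂)ᴴ = boxProd A M₁ᴴ M₂ᴴ := by
  simp only [boxProd_eq_submatrix_kronecker, conjTranspose_submatrix, conjTranspose_kronecker]

theorem boxProd_conj (X σ₁ : QMat {x // x ∈ A}) (Y σ₂ : QMat {x // x ∈ Aᶜ}) :
    boxProd A (X * σ₁ * Xᴴ) (Y * σ₂ * Yᴴ) =
      boxProd A X Y * boxProd A σ₁ σ₂ * (boxProd A X Y)ᴴ := by
  rw [boxProd_conjTranspose, boxProd_mul, boxProd_mul]

variable {A}

theorem IsState.reduceTo {ρ : QMat ι} (hρ : IsState ρ) : IsState (reduceTo A ρ) := by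
  rw [reduceTo_eq_partialTraceRight]
  exact ⟨(hρ.1.submatrix _).partialTraceRight,
    by rw [trace_partialTraceRight, trace_submatrix_equiv, hρ.2]⟩

theorem IsState.boxProd {σ₁ : QMat {x // x ∈ A}} {σ₂ : QMat {x // x ∈ Aᶜ}} (h₁ : IsState σ₁)
    (h₂ : IsState σ₂) : IsState (boxProd A σ₁ σ₂) := by
  rw [boxProd_eq_submatrix_kronecker]
  exact ⟨(h₁.1.kronecker h₂.1).submatrix _,
    by rw [trace_submatrix_equiv, trace_kronecker, h₁.2, h₂.2, one_mul]⟩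

theorem reduceTo_conj_boxProd (X : QMat {x // x ∈ A}) {Y : QMat {x // x ∈ Aᶜ}} (hY : Yᴴ * Y = 1)
    (ρ : QMat ι) :
    reduceTo A (boxProd A X Y * ρ * (boxProd A X Y)ᴴ) = X * reduceTo A ρ * Xᴴ := by
  rw [reduceTo_eq_partialTraceRight, reduceTo_eq_partialTraceRight,
    ← submatrix_mul_equiv _ _ _ (glueEquiv A), ← submatrix_mul_equiv _ _ _ (glueEquiv A),
    ← conjTranspose_submatrix, submatrix_glueEquiv_boxProd,
    partialTraceRight_conj_kronecker X Y hY]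

variable (A)

theorem piKronecker_eq_boxProd (M : ι → Matrix (Fin 2) (Fin 2) ℂ) :
    piKronecker M = boxProd A (piKronecker fun a => M a.1) (piKronecker fun b => M b.1) := by
  ext x y
  simp only [piKronecker, boxProd]
  rw [← Finset.prod_mul_prod_compl A, ← Finset.prod_coe_sort A, ← Finset.prod_coe_sort Aᶜ]

theorem reduceTo_conj_piKronecker {Us : ι → Matrix (Fin 2) (Fin 2) ℂ}
    (hUs : ∀ j, Us j ∈ unitary (Matrix (Fin 2) (Fin 2) ℂ)) (ρ : QMat ι) :
    reduceTo A (piKronecker Us * ρ * (piKronecker Us)ᴴ) =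
      piKronecker (fun a => Us a.1) * reduceTo A ρ * (piKronecker fun a => Us a.1)ᴴ := by
  rw [piKronecker_eq_boxProd A Us, reduceTo_conj_boxProd]
  exact Unitary.star_mul_self_of_mem (piKronecker_mem_unitary fun b => hUs b.1)

end Bipartition

theorem Fintype.card_subtype_lt_of_compl_nonempty {ι : Type*} [Fintype ι] [DecidableEq ι]
    {A : Finset ι} (h : Aᶜ.Nonempty) : Fintype.card {x // x ∈ A} < Fintype.card ι := by
  simpa using (Finset.card_compl_lt_iff_nonempty Aᶜ).2 h

theorem ccm_conj_piKronecker {D : ∀ (κ : Type) [Fintype κ] [DecidableEq κ], QMat κ → QMat κ → ℝ}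
    (hD : DistanceAxioms D) {ι : Type} [Fintype ι] [DecidableEq ι]
    {Us : ι → Matrix (Fin 2) (Fin 2) ℂ} (hUs : ∀ j, Us j ∈ unitary (Matrix (Fin 2) (Fin 2) ℂ))
    {ρ : QMat ι} (hρ : IsState ρ) :
    CCM D ι (piKronecker Us * ρ * (piKronecker Us)ᴴ) = CCM D ι ρ := by
  have hU := piKronecker_mem_unitary hUs
  rw [CCM, CCM]
  split_ifs
  · rfl
  refine congrArg sInf (Set.ext fun r => exists_congr fun A => ?_)
  have hDist := hD.unitary_invariance ι _ (Unitary.mul_star_self_of_mem hU)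
    (Unitary.star_mul_self_of_mem hU) ρ _ hρ (hρ.reduceTo.boxProd (A := A.1) hρ.reduceTo)
  rw [reduceTo_conj_piKronecker A.1 hUs, reduceTo_conj_piKronecker A.1ᶜ hUs, boxProd_conj,
    ← piKronecker_eq_boxProd A.1 Us, hDist,
    ccm_conj_piKronecker hD (fun a : {x // x ∈ A.1} => hUs a) (hρ.reduceTo (A := A.1)),
    ccm_conj_piKronecker hD (fun b : {x // x ∈ A.1ᶜ} => hUs b) (hρ.reduceTo (A := A.1ᶜ))]
termination_by Fintype.card ι
decreasing_by
  · exact Fintype.card_subtype_lt_of_compl_nonempty A.2.2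
  · exact Fintype.card_subtype_lt_of_compl_nonempty (by simpa using A.2.1)

theorem ccm_local_unitary_invariant_general
    (D : ∀ (κ : Type) [Fintype κ] [DecidableEq κ], QMat κ → QMat κ → ℝ)
    (hD : DistanceAxioms D)
    (N : ℕ)
    (Us : Fin N → Matrix (Fin 2) (Fin 2) ℂ)
    (hUs : ∀ j, Us j * (Us j)ᴴ = 1 ∧ (Us j)ᴴ * Us j = 1)
    (U : QMat (Fin N)) (hU : ∀ x y, U x y = ∏ j, Us j (x j) (y j))
    (ρ : QMat (Fin N)) (hρ : IsState ρ) :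
    CCM D (Fin N) (U * ρ * Uᴴ) = CCM D (Fin N) ρ := by
  obtain rfl : U = piKronecker Us := Matrix.ext hU
  exact ccm_conj_piKronecker hD (fun j => Unitary.mem_iff.2 (hUs j).symm) hρ

/-- CCM is invariant under local unitary transformations: if
`U(x,y) = ∏ j, Uʲ(x j, y j)` with each `Uʲ` a `2 × 2` unitary matrix, then for
every `N`-qubit state `ρ`, `C(U ρ U†) = C(ρ)`. -/
theorem ccm_local_unitary_invariant
    (D : ∀ (κ : Type) [Fintype κ] [DecidableEq κ], QMat κ → QMat κ → ℝ)
    (hD : DistanceAxioms D)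
    (N : ℕ) (hN : 1 ≤ N)
    (Us : Fin N → Matrix (Fin 2) (Fin 2) ℂ)
    (hUs : ∀ j, Us j * (Us j)ᴴ = 1 ∧ (Us j)ᴴ * Us j = 1)
    (U : QMat (Fin N)) (hU : ∀ x y, U x y = ∏ j, Us j (x j) (y j))
    (ρ : QMat (Fin N)) (hρ : IsState ρ) :
    CCM D (Fin N) (U * ρ * Uᴴ) = CCM D (Fin N) ρ :=
  ccm_local_unitary_invariant_general D hD N Us hUs U hU ρ hρ
end

section
/- Balanced bipartitions minimize the GHZ recursion: fix d ≥ 0 and define F as in the context. Then for every N ≥ 2 and every a with 1 ≤ a ≤ N−1, F(d, ⌊N/2⌋) + F(d, ⌈N/2⌉) ≤ F(d, a) + F(d, N−a). -/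
/-- The GHZ recursion value `F(x, n)` with fixed parameter `d`:
`F(x,1) = 0`, `F(x,2) = x`, `F(x,3) = 2x + d`,
`F(x,N) = 2^(N−2)·x + 2·F(d, N/2)` for even `N ≥ 4`, and
`F(x,N) = 2^(N−2)·x + F(d, (N−1)/2) + F(d, (N+1)/2)` for odd `N ≥ 5`. -/
noncomputable def F (d : ℝ) (x : ℝ) (n : ℕ) : ℝ :=
  if n ≤ 1 then 0
  else if n = 2 then x
  else if n = 3 then 2 * x + d
  else if n % 2 = 0 then (2 : ℝ) ^ (n - 2) * x + 2 * F d d (n / 2)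
  else (2 : ℝ) ^ (n - 2) * x + F d d ((n - 1) / 2) + F d d ((n + 1) / 2)
termination_by n
decreasing_by
  · omega
  · omega
  · omega

def cc (n : ℕ) : ℕ :=
  if n ≤ 1 then 0
  else if n = 2 then 1
  else if n = 3 then 3
  else if n % 2 = 0 then 2 ^ (n - 2) + 2 * cc (n / 2)
  else 2 ^ (n - 2) + cc ((n - 1) / 2) + cc ((n + 1) / 2)
termination_by n
decreasing_by
  · omega
  · omega
  · omega

def DD (n : ℕ) : ℕ :=
  if n ≤ 1 then 1
  else if n = 2 then 2
  else if n = 3 then 3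
  else 2 ^ (n - 2) + DD (n / 2)
termination_by n
decreasing_by
  · omega

lemma cc_even (k : ℕ) (hk : 2 ≤ k) : cc (2 * k) = 2 ^ (2 * k - 2) + 2 * cc k := by
  rw [cc]
  split_ifs <;> try omega
  rw [show 2 * k / 2 = k from by omega]

lemma cc_odd (k : ℕ) (hk : 2 ≤ k) : cc (2 * k + 1) = 2 ^ (2 * k - 1) + cc k + cc (k + 1) := by
  rw [cc]
  split_ifs <;> try omega
  rw [show (2 * k + 1 - 1) / 2 = k from by omega,
      show (2 * k + 1 + 1) / 2 = k + 1 from by omega,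
      show 2 * k + 1 - 2 = 2 * k - 1 from by omega]

lemma DD_rec (n : ℕ) (h : 4 ≤ n) : DD n = 2 ^ (n - 2) + DD (n / 2) := by
  rw [DD]
  split_ifs <;> omega

lemma pow_split (j : ℕ) (h : 1 ≤ j) : 2 ^ (j + 1) = 2 ^ j + 2 ^ j := by
  rw [pow_succ]; ring

lemma cc_succ : ∀ n, 1 ≤ n → cc (n + 1) = cc n + DD n := by
  intro n
  induction n using Nat.strong_induction_on with
  | _ n ih =>
    intro hn
    match n, hn with
    | 1, _ => simp [cc, DD]
    | 2, _ => simp [cc, DD]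
    | 3, _ => simp [cc, DD]
    | (n+4), _ =>
      rcases Nat.even_or_odd (n + 4) with he | ho
      · obtain ⟨k, hk⟩ := he
        have hk2 : 2 ≤ k := by omega
        have hm : n + 4 = 2 * k := by omega
        rw [hm]
        have e1 : cc (2 * k + 1) = 2 ^ (2 * k - 1) + cc k + cc (k + 1) := cc_odd k hk2
        have e2 : cc (2 * k) = 2 ^ (2 * k - 2) + 2 * cc k := cc_even k hk2
        have e3 : DD (2 * k) = 2 ^ (2 * k - 2) + DD k := by
          rw [DD_rec (2 * k) (by omega), show 2 * k / 2 = k from by omega]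
        have e4 : cc (k + 1) = cc k + DD k := ih k (by omega) (by omega)
        have epow : 2 ^ (2 * k - 1) = 2 ^ (2 * k - 2) + 2 ^ (2 * k - 2) := by
          rw [show 2 * k - 1 = (2 * k - 2) + 1 from by omega]
          exact pow_split _ (by omega)
        omega
      · obtain ⟨k, hk⟩ := ho
        have hk2 : 2 ≤ k := by omega
        have hm : n + 4 = 2 * k + 1 := by omega
        rw [hm]
        have e1 : cc (2 * k + 1 + 1) = 2 ^ (2 * k) + 2 * cc (k + 1) := by
          rw [show 2 * k + 1 + 1 = 2 * (k + 1) from by omega, cc_even (k + 1) (by omega),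
              show 2 * (k + 1) - 2 = 2 * k from by omega]
        have e2 : cc (2 * k + 1) = 2 ^ (2 * k - 1) + cc k + cc (k + 1) := cc_odd k hk2
        have e3 : DD (2 * k + 1) = 2 ^ (2 * k - 1) + DD k := by
          rw [DD_rec (2 * k + 1) (by omega), show (2 * k + 1) / 2 = k from by omega,
              show 2 * k + 1 - 2 = 2 * k - 1 from by omega]
        have e4 : cc (k + 1) = cc k + DD k := ih k (by omega) (by omega)
        have epow : 2 ^ (2 * k) = 2 ^ (2 * k - 1) + 2 ^ (2 * k - 1) := by
          rw [show 2 * k = (2 * k - 1) + 1 from by omega]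
          exact pow_split _ (by omega)
        omega

lemma DD_succ_le : ∀ n, 1 ≤ n → DD n ≤ DD (n + 1) := by
  intro n
  induction n using Nat.strong_induction_on with
  | _ n ih =>
    intro hn
    match n, hn with
    | 1, _ => simp [DD]
    | 2, _ => simp [DD]
    | 3, _ =>
      have : DD 4 = 2 ^ 2 + DD 2 := by rw [DD_rec 4 (by norm_num)]
      simp [DD] at this ⊢
    | (n+4), _ =>
      have e3 : DD (n + 4) = 2 ^ (n + 2) + DD ((n + 4) / 2) := by
        rw [DD_rec _ (by omega), show n + 4 - 2 = n + 2 from by omega]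
      have e4 : DD (n + 4 + 1) = 2 ^ (n + 3) + DD ((n + 4 + 1) / 2) := by
        rw [DD_rec _ (by omega), show n + 4 + 1 - 2 = n + 3 from by omega]
      have epow : 2 ^ (n + 3) = 2 ^ (n + 2) + 2 ^ (n + 2) := pow_split _ (by omega)
      have hpos : (0:ℕ) < 2 ^ (n + 2) := by positivity
      rcases Nat.even_or_odd (n + 4) with he | ho
      · obtain ⟨k, hk⟩ := he
        have h3 : (n + 4 + 1) / 2 = (n + 4) / 2 := by omega
        rw [h3] at e4
        omega
      · obtain ⟨k, hk⟩ := ho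
        have h3 : (n + 4 + 1) / 2 = (n + 4) / 2 + 1 := by omega
        rw [h3] at e4
        have := ih ((n + 4) / 2) (by omega) (by omega)
        omega

lemma DD_mono (p q : ℕ) (hp : 1 ≤ p) (hpq : p ≤ q) : DD p ≤ DD q := by
  induction q, hpq using Nat.le_induction with
  | base => exact le_refl _
  | succ n hn ihq => exact le_trans ihq (DD_succ_le n (by omega))

lemma cc_step (a b : ℕ) (ha : 1 ≤ a) (hab : a + 1 ≤ b) :
    cc (a + 1) + cc b ≤ cc a + cc (b + 1) := by
  rw [cc_succ a ha, cc_succ b (by omega)]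
  have := DD_mono a b ha (by omega)
  omega

lemma cc_balance : ∀ k a b, b - a ≤ k → 1 ≤ a → a ≤ b →
    cc ((a + b) / 2) + cc ((a + b + 1) / 2) ≤ cc a + cc b := by
  intro k
  induction k with
  | zero =>
    intro a b h ha hab
    rw [show (a + b) / 2 = a from by omega, show (a + b + 1) / 2 = b from by omega]
  | succ k ihk =>
    intro a b h ha hab
    by_cases hc : b - a ≤ 1
    · rw [show (a + b) / 2 = a from by omega, show (a + b + 1) / 2 = b from by omega]
    · have hstep : cc (a + 1) + cc (b - 1) ≤ cc a + cc b := by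
        have := cc_step a (b - 1) ha (by omega)
        rwa [show b - 1 + 1 = b from by omega] at this
      have := ihk (a + 1) (b - 1) (by omega) (by omega) (by omega)
      rw [show (a + 1) + (b - 1) = a + b from by omega] at this
      omega

lemma F_eq_c (d : ℝ) : ∀ n, F d d n = (cc n : ℝ) * d := by
  intro n
  induction n using Nat.strong_induction_on with
  | _ n ih =>
    rw [F, cc]
    split_ifs with h1 h2 h3 h4
    · simp
    · simp
    · push_cast; ring
    · rw [ih (n / 2) (by omega)]; push_cast; ring
    · rw [ih ((n - 1) / 2) (by omega), ih ((n + 1) / 2) (by omega)]; push_cast; ring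


/-- Balanced bipartitions minimize the GHZ recursion: for `d ≥ 0`,
every `N ≥ 2` and every `a` with `1 ≤ a ≤ N − 1`,
`F(d, ⌊N/2⌋) + F(d, ⌈N/2⌉) ≤ F(d, a) + F(d, N − a)`. -/
theorem F_balanced_min (d : ℝ) (hd : 0 ≤ d) (N a : ℕ) (hN : 2 ≤ N)
    (ha : 1 ≤ a) (ha' : a ≤ N - 1) :
    F d d (N / 2) + F d d ((N + 1) / 2) ≤ F d d a + F d d (N - a) := by
  have hnat : cc (N / 2) + cc ((N + 1) / 2) ≤ cc a + cc (N - a) := by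
    rcases le_or_gt a (N - a) with h | h
    · have := cc_balance (N - a - a) a (N - a) (by omega) ha h
      rwa [show a + (N - a) = N from by omega] at this
    · have := cc_balance (a - (N - a)) (N - a) a (by omega) (by omega) (by omega)
      rw [show (N - a) + a = N from by omega] at this
      omega
  rw [F_eq_c, F_eq_c, F_eq_c, F_eq_c]
  have hcast : ((cc (N / 2) : ℝ) + cc ((N + 1) / 2)) ≤ (cc a : ℝ) + cc (N - a) := by
    exact_mod_cast hnat
  nlinarith [hcast, hd]
end

section
/- The GHZ correlation values are strictly increasing in the number of qubits: fix d > 0 and define F as in the context. Then for all M, N with 2 ≤ M < N, F(1, M) < F(1, N). -/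
lemma F_two (d x : ℝ) : F d x 2 = x := by
  rw [F]; norm_num

lemma F_three (d x : ℝ) : F d x 3 = 2 * x + d := by
  rw [F]; norm_num

lemma F_of_even (d x : ℝ) {n : ℕ} (hn : 4 ≤ n) (he : n % 2 = 0) :
    F d x n = 2 ^ (n - 2) * x + 2 * F d d (n / 2) := by
  rw [F, if_neg (by omega), if_neg (by omega), if_neg (by omega), if_pos he]

lemma F_of_odd (d x : ℝ) {n : ℕ} (hn : 5 ≤ n) (ho : n % 2 = 1) :
    F d x n = 2 ^ (n - 2) * x + F d d ((n - 1) / 2) + F d d ((n + 1) / 2) := by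
  rw [F, if_neg (by omega), if_neg (by omega), if_neg (by omega), if_neg (by omega)]

lemma F_succ_sub_self (d x : ℝ) {n : ℕ} (hn : 4 ≤ n) :
    F d x (n + 1) - F d x n = 2 ^ (n - 2) * x + (F d d (n / 2 + 1) - F d d (n / 2)) := by
  have hpow : (2 : ℝ) ^ (n + 1 - 2) = 2 * 2 ^ (n - 2) := by
    rw [show n + 1 - 2 = n - 2 + 1 by omega, pow_succ, mul_comm]
  rcases Nat.mod_two_eq_zero_or_one n with he | ho
  · rw [F_of_odd d x (by omega) (by omega), F_of_even d x hn he, hpow,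
      show (n + 1 - 1) / 2 = n / 2 by omega, show (n + 1 + 1) / 2 = n / 2 + 1 by omega]
    ring
  · rw [F_of_even d x (by omega) (by omega), F_of_odd d x (by omega) ho, hpow,
      show (n + 1) / 2 = n / 2 + 1 by omega, show (n - 1) / 2 = n / 2 by omega]
    ring

lemma F_lt_F_succ {d : ℝ} (hd : 0 < d) {n : ℕ} (hn : 2 ≤ n) {x : ℝ} (hx : 0 ≤ x) :
    F d x n < F d x (n + 1) := by
  induction n using Nat.strong_induction_on generalizing x with
  | _ n ih =>
    rcases Nat.lt_or_ge n 4 with hn4 | hn4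
    · interval_cases n
      · rw [F_two, F_three]; linarith
      · rw [F_three, F_of_even d x le_rfl rfl]
        norm_num [F_two]
        linarith
    · have hhalf := ih (n / 2) (by omega) (by omega) hd.le
      have hsucc := F_succ_sub_self d x hn4
      have : (0 : ℝ) ≤ 2 ^ (n - 2) * x := by positivity
      linarith

lemma F_strictMonoOn {d : ℝ} (hd : 0 < d) {x : ℝ} (hx : 0 ≤ x) :
    StrictMonoOn (F d x) (Set.Ici 2) :=
  strictMonoOn_of_lt_succ Set.ordConnected_Ici fun _ _ hn _ => F_lt_F_succ hd hn hx

/-- The GHZ correlation values are strictly increasing in the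
number of qubits: for `d > 0` and `2 ≤ M < N`, `F(1, M) < F(1, N)`. -/
theorem F_one_strictMono (d : ℝ) (hd : 0 < d) (M N : ℕ) (hM : 2 ≤ M) (hMN : M < N) :
    F d 1 M < F d 1 N :=
  F_strictMonoOn hd zero_le_one hM (show 2 ≤ N by omega) hMN
end
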